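/- Let H be a reduced double-well type potential, β > 0, and let Φ_β, λ_β, ν_β be as above. Then: (1) F_β^0(λ_β) · F_β^1(λ_β) = 1 (the characteristic equation); (2) Φ_β|[01] = F_β^1(λ_β) Φ_β|[10] and Φ_β|[10] = F_β^0(λ_β) Φ_β|[01]; (3) ν_β([01]) = F_β^0(λ_β) ν_β([10]) and ν_β([10]) = F_β^1(λ_β) ν_β([01]). -/

import Mathlib

open MeasureTheory Filter Topology

/-- The one-sided full shift space on two symbols. -/
abbrev Sig : Type := ℕ → Fin 2

/-- The left shift map. -/
def shft : Sig → Sig := fun x n => x (n + 1)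

/-- Concatenation of a symbol with a configuration. -/
def cons2 (i : Fin 2) (x : Sig) : Sig := fun n => match n with
  | 0 => i
  | Nat.succ k => x k

/-- `x` and `y` agree on their first `n` coordinates. -/
def nClose (n : ℕ) (x y : Sig) : Prop := ∀ k, k < n → x k = y k

/-- The `n`-th variation of `H`. -/
noncomputable def Var (H : Sig → ℝ) (n : ℕ) : ℝ :=
  sSup {d : ℝ | ∃ x y : Sig, nClose n x y ∧ d = |H x - H y|}

/-- `H` has summable variation. -/
def SummableVar (H : Sig → ℝ) : Prop := Summable (fun n : ℕ => Var H (n + 1))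

/-- The transfer operator at inverse temperature `β`. -/
noncomputable def transfer (β : ℝ) (H : Sig → ℝ) (Φ : Sig → ℝ) : Sig → ℝ :=
  fun x => Real.exp (-β * H (cons2 0 x)) * Φ (cons2 0 x)
         + Real.exp (-β * H (cons2 1 x)) * Φ (cons2 1 x)

/-- The cylinder set determined by a finite word. -/
def cyl (w : List (Fin 2)) : Set Sig := {x | ∀ i : ℕ, ∀ h : i < w.length, x i = w.get ⟨i, h⟩}

/-- The fixed point `0^∞`. -/
def zpt : Sig := fun _ => 0

/-- The fixed point `1^∞`. -/
def opt : Sig := fun _ => 1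

/-- The minimizing ergodic value of `H`. -/
noncomputable def Hbar (H : Sig → ℝ) : ℝ :=
  sInf {r : ℝ | ∃ μ : Measure Sig, IsProbabilityMeasure μ ∧ μ.map shft = μ ∧ r = ∫ x, H x ∂μ}

/-- A minimizing measure for `H`. -/
def IsMinimizing (H : Sig → ℝ) (μ : Measure Sig) : Prop :=
  IsProbabilityMeasure μ ∧ μ.map shft = μ ∧
  ∀ ν : Measure Sig, IsProbabilityMeasure ν → ν.map shft = ν →
    ∫ x, H x ∂μ ≤ ∫ x, H x ∂ν

/-- The (topological) support of a measure. -/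
def mSupport (μ : Measure Sig) : Set Sig := {x | ∀ U : Set Sig, IsOpen U → x ∈ U → μ U ≠ 0}

/-- The Mather set of `H` : union of supports of minimizing measures. -/
def mather (H : Sig → ℝ) : Set Sig := {x | ∃ μ : Measure Sig, IsMinimizing H μ ∧ x ∈ mSupport μ}

/-- Birkhoff sum of the normalized potential. -/
noncomputable def birk (H : Sig → ℝ) (k : ℕ) (z : Sig) : ℝ :=
  ∑ i ∈ Finset.range k, (H (shft^[i] z) - Hbar H)

/-- The quantity `S_n^p(x,y)` (an infimum in `EReal`, `+∞` when the defining set is empty). -/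
noncomputable def SBar (H : Sig → ℝ) (p n : ℕ) (x y : Sig) : EReal :=
  sInf {s : EReal | ∃ k : ℕ, n ≤ k ∧ ∃ z : Sig, nClose p z x ∧ nClose p (shft^[k] z) y ∧
    s = (birk H k z : EReal)}

/-- The Peierls barrier `h(x,y)`; since `S_n^p(x,y)` is nondecreasing in both `n` and `p`,
the double limit is a double supremum. -/
noncomputable def peierls (H : Sig → ℝ) (x y : Sig) : EReal := ⨆ p : ℕ, ⨆ n : ℕ, SBar H p n x y

/-- The Lax-Oleinik operator (the two preimages of `y` under the shift are `0y` and `1y`). -/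
noncomputable def laxOleinik (H V : Sig → ℝ) : Sig → ℝ :=
  fun y => min (V (cons2 0 y) + H (cons2 0 y)) (V (cons2 1 y) + H (cons2 1 y))

/-- A calibrated sub-action of `H`. -/
def IsCalibrated (H V : Sig → ℝ) : Prop :=
  Continuous V ∧ laxOleinik H V = fun y => V y + Hbar H

/-- Membership in the class `𝕂`. -/
def InK (H V : Sig → ℝ) : Prop :=
  Continuous V ∧ ∀ n : ℕ, 1 ≤ n → Var V n ≤ ∑' k : ℕ, Var H (n + 1 + k)

/-- A reduced double-well type potential with data `(H_n^0)`, `(H_n^1)` (indexed from `n = 1`). -/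
structure ReducedDW (H : Sig → ℝ) (H0 H1 : ℕ → ℝ) : Prop where
  cont : Continuous H
  nonneg : ∀ x, 0 ≤ H x
  svar : SummableVar H
  zero : ∀ x ∈ cyl [0, 0] ∪ cyl [1, 1], H x = 0
  pos0 : ∀ n, 1 ≤ n → 0 < H0 n
  pos1 : ∀ n, 1 ≤ n → 0 < H1 n
  val0 : ∀ n, 1 ≤ n → ∀ x ∈ cyl (0 :: (List.replicate n 1 ++ [0])), H x = H0 n
  val1 : ∀ n, 1 ≤ n → ∀ x ∈ cyl (1 :: (List.replicate n 0 ++ [1])), H x = H1 n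
  bdd0 : ∀ k : ℕ, BddAbove (Set.range fun n : ℕ => |H0 (k + 1) - H0 (k + 1 + n)|)
  bdd1 : ∀ k : ℕ, BddAbove (Set.range fun n : ℕ => |H1 (k + 1) - H1 (k + 1 + n)|)
  sum0 : Summable (fun k : ℕ => ⨆ n : ℕ, |H0 (k + 1) - H0 (k + 1 + n)|)
  sum1 : Summable (fun k : ℕ => ⨆ n : ℕ, |H1 (k + 1) - H1 (k + 1 + n)|)

/-- A double-well type potential with data `a_n^0, a_n^1, b_n^0, b_n^1` (indexed from `n = 1`). -/
structure DW (H : Sig → ℝ) (a0 a1 b0 b1 : ℕ → ℝ) : Prop where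
  cont : Continuous H
  nonneg : ∀ x, 0 ≤ H x
  svar : SummableVar H
  anneg0 : ∀ n, 1 ≤ n → 0 ≤ a0 n
  anneg1 : ∀ n, 1 ≤ n → 0 ≤ a1 n
  bpos0 : ∀ n, 1 ≤ n → 0 < b0 n
  bpos1 : ∀ n, 1 ≤ n → 0 < b1 n
  vala0 : ∀ n, 1 ≤ n → ∀ x ∈ cyl (0 :: (List.replicate n 0 ++ [1])), H x = a0 n
  vala1 : ∀ n, 1 ≤ n → ∀ x ∈ cyl (1 :: (List.replicate n 1 ++ [0])), H x = a1 n
  valb0 : ∀ n, 1 ≤ n → ∀ x ∈ cyl (0 :: (List.replicate n 1 ++ [0])), H x = b0 n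
  valb1 : ∀ n, 1 ≤ n → ∀ x ∈ cyl (1 :: (List.replicate n 0 ++ [1])), H x = b1 n
  suma0 : Summable (fun n : ℕ => ((n + 1 : ℕ) : ℝ) * a0 (n + 1))
  suma1 : Summable (fun n : ℕ => ((n + 1 : ℕ) : ℝ) * a1 (n + 1))
  bddb0 : ∀ k : ℕ, BddAbove (Set.range fun n : ℕ => |b0 (k + 1) - b0 (k + 1 + n)|)
  bddb1 : ∀ k : ℕ, BddAbove (Set.range fun n : ℕ => |b1 (k + 1) - b1 (k + 1 + n)|)
  sumb0 : Summable (fun k : ℕ => ⨆ n : ℕ, |b0 (k + 1) - b0 (k + 1 + n)|)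
  sumb1 : Summable (fun k : ℕ => ⨆ n : ℕ, |b1 (k + 1) - b1 (k + 1 + n)|)

/-- The series `F_β(λ) = Σ_{k≥1} λ^{-k} e^{-β H_k}`. -/
noncomputable def Fser (β : ℝ) (Hs : ℕ → ℝ) (lam : ℝ) : ℝ :=
  ∑' k : ℕ, (lam ^ (k + 1))⁻¹ * Real.exp (-β * Hs (k + 1))

/-- The series `F̃_β(λ) = Σ_{k≥1} k λ^{-k} e^{-β H_k}`. -/
noncomputable def Ftser (β : ℝ) (Hs : ℕ → ℝ) (lam : ℝ) : ℝ :=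
  ∑' k : ℕ, ((k + 1 : ℕ) : ℝ) * (lam ^ (k + 1))⁻¹ * Real.exp (-β * Hs (k + 1))

/-- The data of the Ruelle-Perron-Frobenius solution and Gibbs measure at inverse temperature `β`:
eigenfunction `Φ` (positive, continuous, max 1), eigenvalue `lam`, eigenprobability `ν`,
and the Gibbs measure `μ = Φ ν / ∫ Φ dν`. -/
def GibbsData (H : Sig → ℝ) (β : ℝ) (Φ : Sig → ℝ) (lam : ℝ) (ν μ : Measure Sig) : Prop :=
  Continuous Φ ∧ (∀ x, 0 < Φ x) ∧ IsGreatest (Set.range Φ) 1 ∧ 0 < lam ∧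
  (transfer β H Φ = fun x => lam * Φ x) ∧
  IsProbabilityMeasure ν ∧
  (∀ f : Sig → ℝ, Continuous f → ∫ x, transfer β H f x ∂ν = lam * ∫ x, f x ∂ν) ∧
  μ = (ENNReal.ofReal (∫ x, Φ x ∂ν))⁻¹ • ν.withDensity (fun x => ENNReal.ofReal (Φ x))


/-!
For `t ∈ [j]` the eigenvalue equation at the points `i^{m+1} t` reads
`λ Φ(i^{m+1} t) = Φ(i^{m+2} t) + e^{-β H^j_{m+1}} Φ(j i^{m+1} t)` (the potential vanishes on `[ii]`
and equals `H^j_{m+1}` on the excursion `[j i^{m+1} j]`); it telescopes to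
`Φ(i t) = Σ_m λ^{-(m+1)} e^{-β H^j_{m+1}} Φ(j i^{m+1} t)`. So `Φ(i ·)` on `[j]` is an
`F^j(λ)`-weighted average of values of `Φ(j ·)` on `[i]`, and vice versa. Comparing maxima and
minima over these compact cylinders gives `F^0(λ) F^1(λ) = 1`; then all inequalities are equalities,
and the points `j i^{m+1} t` accumulating at `j i^∞` force `Φ(j ·)` to be constant on `[i]`.

Dually, `λ ν[a w] = ∫_{[w]} e^{-β H(a x)} dν`, so `ν[j i^k j] = λ^{-k} e^{-β H^j_k} ν[ij]`;
summing over the excursion lengths, while the remaining mass `ν[j i^k]` decays like `λ^{-k}`,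
gives `ν[ji] = F^j(λ) ν[ij]`.
-/

lemma hasSum_of_eq_add_of_tendsto {u c : ℕ → ℝ} {l : ℝ} (hc : ∀ m, 0 ≤ c m)
    (hrec : ∀ m, u m = u (m + 1) + c m) (hu : Tendsto u atTop (𝓝 l)) : HasSum c (u 0 - l) := by
  rw [hasSum_iff_tendsto_nat_of_nonneg hc]
  have hpartial : ∀ n, ∑ m ∈ Finset.range n, c m = u 0 - u n := fun n => by
    rw [← Finset.sum_range_sub']
    exact Finset.sum_congr rfl fun m _ => by linarith [hrec m]
  simpa only [hpartial] using tendsto_const_nhds.sub hu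

section WeightedSum

variable {X : Type*} {w : ℕ → ℝ} {W y : ℝ} {f : X → ℝ} {x : ℕ → X} {S : Set X} {x₀ : X}

lemma le_mul_of_isMaxOn (hw : ∀ m, 0 ≤ w m) (hW : HasSum w W)
    (hy : HasSum (fun m => w m * f (x m)) y) (hx : ∀ m, x m ∈ S) (hmax : IsMaxOn f S x₀) :
    y ≤ W * f x₀ :=
  hasSum_le (fun m => mul_le_mul_of_nonneg_left (hmax (hx m)) (hw m)) hy (hW.mul_right _)

lemma apply_eq_of_isMaxOn (hw : ∀ m, 0 < w m) (hW : HasSum w W)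
    (hy : HasSum (fun m => w m * f (x m)) (W * f x₀)) (hx : ∀ m, x m ∈ S)
    (hmax : IsMaxOn f S x₀) (m : ℕ) : f (x m) = f x₀ := by
  by_contra hne
  have hlt : w m * f (x m) < w m * f x₀ :=
    mul_lt_mul_of_pos_left (lt_of_le_of_ne (hmax (hx m)) hne) (hw m)
  exact (hasSum_lt (g := fun k => w k * f x₀)
    (fun k => mul_le_mul_of_nonneg_left (hmax (hx k)) (hw k).le) hlt hy (hW.mul_right _)).false

end WeightedSum

lemma fin_two_eq_or_eq {i j : Fin 2} (hij : i ≠ j) (a : Fin 2) : a = i ∨ a = j := by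
  omega

lemma cyl_eq_iInter (w : List (Fin 2)) :
    cyl w = ⋂ k : Fin w.length, (fun x : Sig => x k) ⁻¹' {w.get k} := by
  ext x
  simp only [cyl, Set.mem_ofPred_eq, Set.mem_iInter, Set.mem_preimage, Set.mem_singleton_iff]
  exact ⟨fun h k => h k k.2, fun h k hk => h ⟨k, hk⟩⟩

lemma isClopen_cyl (w : List (Fin 2)) : IsClopen (cyl w) := by
  rw [cyl_eq_iInter]
  exact isClopen_iInter_of_finite fun k => (isClopen_discrete _).preimage (continuous_apply _)

lemma measurableSet_cyl (w : List (Fin 2)) : MeasurableSet (cyl w) :=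
  (isClopen_cyl w).isClosed.measurableSet

lemma mem_cyl_nil (x : Sig) : x ∈ cyl [] := fun _ h => absurd h (Nat.not_lt_zero _)

lemma mem_cyl_singleton (a : Fin 2) (x : Sig) : x ∈ cyl [a] ↔ x 0 = a := by
  refine ⟨fun h => h 0 Nat.one_pos, fun h n hn => ?_⟩
  obtain rfl : n = 0 := by simpa using hn
  exact h

lemma mem_cyl_cons2 (a b : Fin 2) (w : List (Fin 2)) (x : Sig) :
    cons2 a x ∈ cyl (b :: w) ↔ a = b ∧ x ∈ cyl w := by
  constructor
  · intro h
    exact ⟨h 0 (Nat.succ_pos _), fun k hk => h (k + 1) (Nat.succ_lt_succ hk)⟩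
  · rintro ⟨rfl, h⟩ (_ | k) hk
    · rfl
    · exact h k (Nat.lt_of_succ_lt_succ hk)

lemma mem_cyl_append_singleton (w : List (Fin 2)) (a : Fin 2) (x : Sig) :
    x ∈ cyl (w ++ [a]) ↔ x ∈ cyl w ∧ x w.length = a := by
  simp only [cyl, Set.mem_ofPred_eq, List.length_append, List.length_singleton, List.get_eq_getElem]
  constructor
  · intro h
    refine ⟨fun k hk => by simpa [List.getElem_append_left hk] using h k (by omega), ?_⟩
    simpa using h w.length (by omega)
  · rintro ⟨h, ha⟩ k hk
    rcases Nat.lt_or_ge k w.length with hk' | hk'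
    · simpa [List.getElem_append_left hk'] using h k hk'
    · obtain rfl : k = w.length := by omega
      simpa using ha

lemma cyl_append_singleton_union {i j : Fin 2} (hij : i ≠ j) (w : List (Fin 2)) :
    cyl (w ++ [i]) ∪ cyl (w ++ [j]) = cyl w := by
  ext x
  simp only [Set.mem_union, mem_cyl_append_singleton]
  rcases fin_two_eq_or_eq hij (x w.length) with h | h <;> simp [h, hij, hij.symm]

lemma disjoint_cyl_append_singleton {i j : Fin 2} (hij : i ≠ j) (w : List (Fin 2)) :
    Disjoint (cyl (w ++ [i])) (cyl (w ++ [j])) :=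
  Set.disjoint_left.2 fun _ hi hj =>
    hij (((mem_cyl_append_singleton _ _ _).1 hi).2.symm.trans
      ((mem_cyl_append_singleton _ _ _).1 hj).2)

lemma continuous_cons2 (i : Fin 2) : Continuous (cons2 i) :=
  continuous_pi fun n => by cases n <;> [exact continuous_const; exact continuous_apply _]

lemma iterate_cons2_mem_cyl_iff (i : Fin 2) (k : ℕ) (w : List (Fin 2)) (t : Sig) :
    (cons2 i)^[k] t ∈ cyl (List.replicate k i ++ w) ↔ t ∈ cyl w := by
  induction k with
  | zero => rfl
  | succ k ih =>
    rw [Function.iterate_succ_apply', List.replicate_succ, List.cons_append, mem_cyl_cons2]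
    simp [ih]

lemma iterate_cons2_succ_mem_cyl (i : Fin 2) (m : ℕ) (t : Sig) :
    (cons2 i)^[m + 1] t ∈ cyl [i] := by
  rw [Function.iterate_succ_apply', mem_cyl_cons2]
  exact ⟨rfl, mem_cyl_nil _⟩

lemma iterate_cons2_apply_of_lt (i : Fin 2) (t : Sig) {m n : ℕ} (h : n < m) :
    (cons2 i)^[m] t n = i := by
  induction m generalizing n with
  | zero => omega
  | succ m ih =>
    rw [Function.iterate_succ_apply']
    cases n with
    | zero => rfl
    | succ n => exact ih (by omega)

lemma tendsto_iterate_cons2 (i : Fin 2) (t : Sig) :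
    Tendsto (fun m => (cons2 i)^[m] t) atTop (𝓝 fun _ => i) :=
  tendsto_pi_nhds.2 fun n => tendsto_const_nhds.congr' <|
    (eventually_gt_atTop n).mono fun _ h => (iterate_cons2_apply_of_lt i t h).symm

lemma transfer_apply_of_ne {i j : Fin 2} (hij : i ≠ j) (β : ℝ) (H Φ : Sig → ℝ) (x : Sig) :
    transfer β H Φ x = Real.exp (-β * H (cons2 i x)) * Φ (cons2 i x)
      + Real.exp (-β * H (cons2 j x)) * Φ (cons2 j x) := by
  fin_cases i <;> fin_cases j
  all_goals first | exact absurd rfl hij | rfl | exact add_comm _ _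

lemma one_lt_of_transfer_eq {β lam : ℝ} {H Φ : Sig → ℝ} (hH : H zpt = 0) (hΦ : ∀ x, 0 < Φ x)
    (heig : transfer β H Φ = fun x => lam * Φ x) : 1 < lam := by
  have hfix : cons2 0 zpt = zpt := funext fun n => by cases n <;> rfl
  have h := congrFun heig zpt
  simp only [transfer, hfix, hH, mul_zero, Real.exp_zero, one_mul] at h
  have hpos := mul_pos (Real.exp_pos (-β * H (cons2 1 zpt))) (hΦ (cons2 1 zpt))
  nlinarith [hΦ zpt]

noncomputable def Fterm (β : ℝ) (Hs : ℕ → ℝ) (lam : ℝ) (k : ℕ) : ℝ :=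
  (lam ^ (k + 1))⁻¹ * Real.exp (-β * Hs (k + 1))

section Fterm

variable {β lam : ℝ} {Hs : ℕ → ℝ}

lemma Fterm_pos (hlam : 0 < lam) (k : ℕ) : 0 < Fterm β Hs lam k := by
  unfold Fterm; positivity

lemma hasSum_Fterm (hβ : 0 ≤ β) (hlam : 1 < lam) (hHs : ∀ k, 1 ≤ k → 0 ≤ Hs k) :
    HasSum (Fterm β Hs lam) (Fser β Hs lam) := by
  have hle : ∀ k, Fterm β Hs lam k ≤ lam⁻¹ * lam⁻¹ ^ k := fun k => by
    have hexp : Real.exp (-β * Hs (k + 1)) ≤ 1 :=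
      Real.exp_le_one_iff.2 (by nlinarith [hHs (k + 1) (by omega)])
    calc Fterm β Hs lam k ≤ (lam ^ (k + 1))⁻¹ * 1 :=
          mul_le_mul_of_nonneg_left hexp (by positivity)
      _ = lam⁻¹ * lam⁻¹ ^ k := by rw [mul_one, ← inv_pow, pow_succ']
  exact (Summable.of_nonneg_of_le (fun k => (Fterm_pos (by linarith) k).le) hle
    ((summable_geometric_of_lt_one (by positivity) (inv_lt_one_of_one_lt₀ hlam)).mul_left _)).hasSum

end Fterm

lemma hasSum_eigenfunction {β lam : ℝ} {H Φ : Sig → ℝ} {Hi : ℕ → ℝ} {i j : Fin 2} (hij : i ≠ j)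
    (hlam : 1 < lam) (hΦ0 : ∀ x, 0 ≤ Φ x) (hΦ1 : ∀ x, Φ x ≤ 1)
    (heig : transfer β H Φ = fun x => lam * Φ x) (hzero : ∀ x ∈ cyl [i, i], H x = 0)
    (hexc : ∀ k, 1 ≤ k → ∀ x ∈ cyl (j :: (List.replicate k i ++ [j])), H x = Hi k)
    {t : Sig} (ht : t ∈ cyl [j]) :
    HasSum (fun m => Fterm β Hi lam m * Φ (cons2 j ((cons2 i)^[m + 1] t))) (Φ (cons2 i t)) := by
  set y : ℕ → Sig := fun m => (cons2 i)^[m + 1] t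
  have hlam0 : 0 < lam := by linarith
  have heig_y : ∀ m,
      lam * Φ (y m) = Φ (y (m + 1)) + Real.exp (-β * Hi (m + 1)) * Φ (cons2 j (y m)) := by
    intro m
    have hsucc : y (m + 1) = cons2 i (y m) := Function.iterate_succ_apply' _ _ _
    have hii : H (cons2 i (y m)) = 0 :=
      hzero _ ((mem_cyl_cons2 _ _ _ _).2 ⟨rfl, iterate_cons2_succ_mem_cyl i m t⟩)
    have hji : H (cons2 j (y m)) = Hi (m + 1) := hexc _ (by omega) _
      ((mem_cyl_cons2 _ _ _ _).2 ⟨rfl, (iterate_cons2_mem_cyl_iff _ _ _ _).2 ht⟩)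
    have h := congrFun heig (y m)
    rw [transfer_apply_of_ne hij, hii, hji, ← hsucc, mul_zero, Real.exp_zero, one_mul] at h
    exact h.symm
  have hrec : ∀ m, (lam ^ m)⁻¹ * Φ (y m) = (lam ^ (m + 1))⁻¹ * Φ (y (m + 1))
      + Fterm β Hi lam m * Φ (cons2 j (y m)) := by
    intro m
    have h := heig_y m
    simp only [Fterm, pow_succ, neg_mul] at h ⊢
    field_simp
    linarith
  have hlim : Tendsto (fun m => (lam ^ m)⁻¹ * Φ (y m)) atTop (𝓝 0) := by
    refine squeeze_zero (fun m => mul_nonneg (by positivity) (hΦ0 _)) (fun m => ?_)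
      (tendsto_pow_atTop_nhds_zero_of_lt_one (by positivity) (inv_lt_one_of_one_lt₀ hlam))
    calc (lam ^ m)⁻¹ * Φ (y m) ≤ (lam ^ m)⁻¹ * 1 :=
          mul_le_mul_of_nonneg_left (hΦ1 _) (by positivity)
      _ = lam⁻¹ ^ m := by rw [mul_one, inv_pow]
  have h := hasSum_of_eq_add_of_tendsto
    (fun m => mul_nonneg (Fterm_pos hlam0 m).le (hΦ0 _)) hrec hlim
  simpa [y] using h

section CoupledExpansion

variable {a b : Sig → ℝ} {w v : ℕ → ℝ} {W V : ℝ} {i j : Fin 2}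

lemma le_mul_and_le_mul_of_isMaxOn (hw : ∀ m, 0 ≤ w m) (hW : HasSum w W)
    (hv : ∀ m, 0 ≤ v m) (hV : HasSum v V)
    (hA : ∀ t ∈ cyl [j], HasSum (fun m => w m * b ((cons2 i)^[m + 1] t)) (a t))
    (hB : ∀ s ∈ cyl [i], HasSum (fun m => v m * a ((cons2 j)^[m + 1] s)) (b s))
    {t₀ s₀ : Sig} (ht₀ : t₀ ∈ cyl [j]) (hs₀ : s₀ ∈ cyl [i])
    (ha : IsMaxOn a (cyl [j]) t₀) (hb : IsMaxOn b (cyl [i]) s₀) :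
    a t₀ ≤ W * b s₀ ∧ b s₀ ≤ V * a t₀ :=
  ⟨le_mul_of_isMaxOn hw hW (hA t₀ ht₀) (iterate_cons2_succ_mem_cyl i · t₀) hb,
    le_mul_of_isMaxOn hv hV (hB s₀ hs₀) (iterate_cons2_succ_mem_cyl j · s₀) ha⟩

/-- When `W * V = 1` the two inequalities of `le_mul_and_le_mul_of_isMaxOn` are equalities, so
every term in the expansion of `a t₀` is maximal, and the points `i^{m+1} t₀` converge to `i^∞`. -/
lemma apply_const_eq_of_isMaxOn (hbc : Continuous b) (hw : ∀ m, 0 < w m) (hW : HasSum w W)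
    (hv : ∀ m, 0 ≤ v m) (hV : HasSum v V) (hWV : W * V = 1)
    (hA : ∀ t ∈ cyl [j], HasSum (fun m => w m * b ((cons2 i)^[m + 1] t)) (a t))
    (hB : ∀ s ∈ cyl [i], HasSum (fun m => v m * a ((cons2 j)^[m + 1] s)) (b s))
    {t₀ s₀ : Sig} (ht₀ : t₀ ∈ cyl [j]) (hs₀ : s₀ ∈ cyl [i])
    (ha : IsMaxOn a (cyl [j]) t₀) (hb : IsMaxOn b (cyl [i]) s₀) :
    b (fun _ => i) = b s₀ := by
  obtain ⟨hab, hba⟩ :=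
    le_mul_and_le_mul_of_isMaxOn (fun m => (hw m).le) hW hv hV hA hB ht₀ hs₀ ha hb
  have hW0 : 0 ≤ W := hW.nonneg fun m => (hw m).le
  have heq : a t₀ = W * b s₀ := le_antisymm hab <| calc
    W * b s₀ ≤ W * (V * a t₀) := mul_le_mul_of_nonneg_left hba hW0
    _ = a t₀ := by rw [← mul_assoc, hWV, one_mul]
  have hterm := apply_eq_of_isMaxOn hw hW (heq ▸ hA t₀ ht₀) (iterate_cons2_succ_mem_cyl i · t₀) hb
  have hlim := (hbc.tendsto _).comp ((tendsto_iterate_cons2 i t₀).comp (tendsto_add_atTop_nat 1))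
  exact tendsto_nhds_unique hlim (tendsto_const_nhds.congr fun m => (hterm m).symm)

lemma mul_eq_one_and_apply_eq_const (hac : Continuous a) (hbc : Continuous b)
    (ha0 : ∀ t, 0 < a t) (hw : ∀ m, 0 < w m) (hW : HasSum w W)
    (hv : ∀ m, 0 < v m) (hV : HasSum v V)
    (hA : ∀ t ∈ cyl [j], HasSum (fun m => w m * b ((cons2 i)^[m + 1] t)) (a t))
    (hB : ∀ s ∈ cyl [i], HasSum (fun m => v m * a ((cons2 j)^[m + 1] s)) (b s)) :
    W * V = 1 ∧ ∀ s ∈ cyl [i], b s = b (fun _ => i) := by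
  have hK : ∀ k : Fin 2, IsCompact (cyl [k]) := fun k => (isClopen_cyl _).isClosed.isCompact
  have hne : ∀ k : Fin 2, (cyl [k]).Nonempty := fun k => ⟨fun _ => k, (mem_cyl_singleton _ _).2 rfl⟩
  obtain ⟨t₁, ht₁, ha₁⟩ := (hK j).exists_isMaxOn (hne j) hac.continuousOn
  obtain ⟨t₂, ht₂, ha₂⟩ := (hK j).exists_isMinOn (hne j) hac.continuousOn
  obtain ⟨s₁, hs₁, hb₁⟩ := (hK i).exists_isMaxOn (hne i) hbc.continuousOn
  obtain ⟨s₂, hs₂, hb₂⟩ := (hK i).exists_isMinOn (hne i) hbc.continuousOn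
  -- minima of `a, b` are maxima of `-a, -b`, which satisfy the same expansions
  have hA' : ∀ t ∈ cyl [j], HasSum (fun m => w m * -b ((cons2 i)^[m + 1] t)) (-a t) :=
    fun t ht => by simpa only [mul_neg] using (hA t ht).neg
  have hB' : ∀ s ∈ cyl [i], HasSum (fun m => v m * -a ((cons2 j)^[m + 1] s)) (-b s) :=
    fun s hs => by simpa only [mul_neg] using (hB s hs).neg
  have hw0 : ∀ m, 0 ≤ w m := fun m => (hw m).le
  have hv0 : ∀ m, 0 ≤ v m := fun m => (hv m).le
  have hW0 : 0 ≤ W := hW.nonneg hw0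
  obtain ⟨hmax_ab, hmax_ba⟩ := le_mul_and_le_mul_of_isMaxOn hw0 hW hv0 hV hA hB ht₁ hs₁ ha₁ hb₁
  obtain ⟨hmin_ab, hmin_ba⟩ :=
    le_mul_and_le_mul_of_isMaxOn (a := fun t => -a t) (b := fun s => -b s)
      hw0 hW hv0 hV hA' hB' ht₂ hs₂ ha₂.neg hb₂.neg
  have hchain : ∀ {x y z : ℝ}, x ≤ W * y → y ≤ V * z → x ≤ W * V * z := fun hxy hyz =>
    hxy.trans (by rw [mul_assoc]; exact mul_le_mul_of_nonneg_left hyz hW0)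
  have h₁ := hchain hmax_ab hmax_ba
  have h₂ := hchain hmin_ab hmin_ba
  have hWV : W * V = 1 := le_antisymm
    (le_of_mul_le_mul_right (by linarith : W * V * a t₂ ≤ 1 * a t₂) (ha0 t₂))
    (le_of_mul_le_mul_right (by linarith : 1 * a t₁ ≤ W * V * a t₁) (ha0 t₁))
  have hmax := apply_const_eq_of_isMaxOn hbc hw hW hv0 hV hWV hA hB ht₁ hs₁ ha₁ hb₁
  have hmin := apply_const_eq_of_isMaxOn (a := fun t => -a t) (b := fun s => -b s)
    hbc.neg hw hW hv0 hV hWV hA' hB' ht₂ hs₂ ha₂.neg hb₂.neg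
  exact ⟨hWV, fun s hs => le_antisymm (hmax ▸ hb₁ hs) (neg_inj.1 hmin ▸ hb₂ hs)⟩

end CoupledExpansion

lemma Fser_mul_Fser_eq_one_and_eigenfunction_eq {β lam : ℝ} {H Φ : Sig → ℝ} {Hi Hj : ℕ → ℝ}
    {i j : Fin 2} (hij : i ≠ j) (hβ : 0 ≤ β) (hlam : 1 < lam)
    (hΦc : Continuous Φ) (hΦpos : ∀ x, 0 < Φ x) (hΦ1 : ∀ x, Φ x ≤ 1)
    (heig : transfer β H Φ = fun x => lam * Φ x)
    (hzi : ∀ x ∈ cyl [i, i], H x = 0) (hzj : ∀ x ∈ cyl [j, j], H x = 0)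
    (hexci : ∀ k, 1 ≤ k → ∀ x ∈ cyl (j :: (List.replicate k i ++ [j])), H x = Hi k)
    (hexcj : ∀ k, 1 ≤ k → ∀ x ∈ cyl (i :: (List.replicate k j ++ [i])), H x = Hj k)
    (hHi : ∀ k, 1 ≤ k → 0 ≤ Hi k) (hHj : ∀ k, 1 ≤ k → 0 ≤ Hj k) :
    Fser β Hi lam * Fser β Hj lam = 1 ∧
      Φ (cons2 i fun _ => j) = Fser β Hi lam * Φ (cons2 j fun _ => i) := by
  have hΦ0 : ∀ x, 0 ≤ Φ x := fun x => (hΦpos x).le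
  have hA := fun t (ht : t ∈ cyl [j]) => hasSum_eigenfunction hij hlam hΦ0 hΦ1 heig hzi hexci ht
  have hB := fun s (hs : s ∈ cyl [i]) =>
    hasSum_eigenfunction hij.symm hlam hΦ0 hΦ1 heig hzj hexcj hs
  obtain ⟨hWV, hconst⟩ := mul_eq_one_and_apply_eq_const
    (a := fun t => Φ (cons2 i t)) (b := fun s => Φ (cons2 j s))
    (hΦc.comp (continuous_cons2 i)) (hΦc.comp (continuous_cons2 j)) (fun t => hΦpos _)
    (Fterm_pos (by linarith)) (hasSum_Fterm hβ hlam hHi)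
    (Fterm_pos (by linarith)) (hasSum_Fterm hβ hlam hHj) hA hB
  refine ⟨hWV, ?_⟩
  have h := hA (fun _ => j) ((mem_cyl_singleton j _).2 rfl)
  simp only [fun m => hconst _ (iterate_cons2_succ_mem_cyl i m fun _ => j)] at h
  rw [← h.tsum_eq, tsum_mul_right]
  rfl

lemma transfer_indicator_cyl_cons (β : ℝ) (H : Sig → ℝ) (a : Fin 2) (w : List (Fin 2)) (x : Sig) :
    transfer β H ((cyl (a :: w)).indicator 1) x
      = (cyl w).indicator (fun x => Real.exp (-β * H (cons2 a x))) x := by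
  obtain ⟨b, hab⟩ : ∃ b, a ≠ b := ⟨a + 1, by omega⟩
  have hb : cons2 b x ∉ cyl (a :: w) := fun h => hab ((mem_cyl_cons2 _ _ _ _).1 h).1.symm
  rw [transfer_apply_of_ne hab, Set.indicator_of_notMem hb, mul_zero, add_zero]
  by_cases hx : x ∈ cyl w
  · rw [Set.indicator_of_mem ((mem_cyl_cons2 _ _ _ _).2 ⟨rfl, hx⟩), Set.indicator_of_mem hx,
      Pi.one_apply, mul_one]
  · rw [Set.indicator_of_notMem fun h => hx ((mem_cyl_cons2 _ _ _ _).1 h).2,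
      Set.indicator_of_notMem hx, mul_zero]

section Conformal

variable {β lam : ℝ} {H : Sig → ℝ} {ν : Measure Sig}

lemma mul_measureReal_cyl_cons
    (hνeig : ∀ f : Sig → ℝ, Continuous f → ∫ x, transfer β H f x ∂ν = lam * ∫ x, f x ∂ν)
    (a : Fin 2) (w : List (Fin 2)) :
    lam * ν.real (cyl (a :: w)) = ∫ x in cyl w, Real.exp (-β * H (cons2 a x)) ∂ν := by
  have h := hνeig _ ((isClopen_cyl (a :: w)).continuous_indicator continuous_one)
  simp only [transfer_indicator_cyl_cons] at h
  rw [integral_indicator (measurableSet_cyl w), integral_indicator_one (measurableSet_cyl _)] at h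
  exact h.symm

lemma mul_measureReal_cyl_cons_of_eq
    (hνeig : ∀ f : Sig → ℝ, Continuous f → ∫ x, transfer β H f x ∂ν = lam * ∫ x, f x ∂ν)
    {a : Fin 2} {w : List (Fin 2)} {h : ℝ} (hH : ∀ x ∈ cyl w, H (cons2 a x) = h) :
    lam * ν.real (cyl (a :: w)) = Real.exp (-β * h) * ν.real (cyl w) := by
  rw [mul_measureReal_cyl_cons hνeig, setIntegral_congr_fun (measurableSet_cyl w)
    fun x hx => by rw [hH x hx], setIntegral_const, smul_eq_mul, mul_comm]

lemma mul_measureReal_cyl_cons_le [IsFiniteMeasure ν] (hβ : 0 ≤ β) (hH : ∀ x, 0 ≤ H x)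
    (hνeig : ∀ f : Sig → ℝ, Continuous f → ∫ x, transfer β H f x ∂ν = lam * ∫ x, f x ∂ν)
    (a : Fin 2) (w : List (Fin 2)) : lam * ν.real (cyl (a :: w)) ≤ ν.real (cyl w) := by
  rw [mul_measureReal_cyl_cons hνeig]
  refine (Real.le_norm_self _).trans ((norm_setIntegral_le_of_norm_le_const (measure_lt_top ν _)
    fun x _ => ?_).trans (one_mul _).le)
  rw [Real.norm_eq_abs, abs_of_pos (Real.exp_pos _), Real.exp_le_one_iff]
  nlinarith [hH (cons2 a x)]

lemma measureReal_cyl_le [IsProbabilityMeasure ν] (hβ : 0 ≤ β) (hlam : 0 < lam)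
    (hH : ∀ x, 0 ≤ H x)
    (hνeig : ∀ f : Sig → ℝ, Continuous f → ∫ x, transfer β H f x ∂ν = lam * ∫ x, f x ∂ν)
    (w : List (Fin 2)) : ν.real (cyl w) ≤ lam⁻¹ ^ w.length := by
  induction w with
  | nil => exact measureReal_le_one
  | cons a w ih =>
    rw [List.length_cons, pow_succ', le_inv_mul_iff₀ hlam]
    exact (mul_measureReal_cyl_cons_le hβ hH hνeig a w).trans ih

lemma measureReal_cyl_replicate_append (hlam : 0 < lam)
    (hνeig : ∀ f : Sig → ℝ, Continuous f → ∫ x, transfer β H f x ∂ν = lam * ∫ x, f x ∂ν)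
    {i : Fin 2} (hzero : ∀ x ∈ cyl [i, i], H x = 0) (j : Fin 2) (k : ℕ) :
    ν.real (cyl (List.replicate (k + 1) i ++ [j])) = lam⁻¹ ^ k * ν.real (cyl [i, j]) := by
  induction k with
  | zero => rw [pow_zero, one_mul]; rfl
  | succ k ih =>
    have h := mul_measureReal_cyl_cons_of_eq (a := i) (w := List.replicate (k + 1) i ++ [j])
      (h := 0) hνeig fun x hx =>
        hzero _ ((mem_cyl_cons2 _ _ _ _).2 ⟨rfl, (mem_cyl_singleton _ _).2 (hx 0 (Nat.succ_pos _))⟩)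
    rw [ih, mul_zero, Real.exp_zero, one_mul] at h
    rw [pow_succ', mul_assoc, ← h, inv_mul_cancel_left₀ hlam.ne']
    rfl

lemma measureReal_cyl_excursion (hlam : 0 < lam)
    (hνeig : ∀ f : Sig → ℝ, Continuous f → ∫ x, transfer β H f x ∂ν = lam * ∫ x, f x ∂ν)
    {Hi : ℕ → ℝ} {i j : Fin 2} (hzero : ∀ x ∈ cyl [i, i], H x = 0)
    (hexc : ∀ k, 1 ≤ k → ∀ x ∈ cyl (j :: (List.replicate k i ++ [j])), H x = Hi k) (k : ℕ) :
    ν.real (cyl (j :: (List.replicate (k + 1) i ++ [j])))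
      = Fterm β Hi lam k * ν.real (cyl [i, j]) := by
  have h := mul_measureReal_cyl_cons_of_eq (a := j) (w := List.replicate (k + 1) i ++ [j])
    hνeig fun x hx => hexc (k + 1) (by omega) _ ((mem_cyl_cons2 _ _ _ _).2 ⟨rfl, hx⟩)
  rw [measureReal_cyl_replicate_append hlam hνeig hzero] at h
  rw [Fterm, pow_succ', mul_inv, ← inv_pow, mul_assoc, mul_assoc, ← mul_left_comm _ (lam⁻¹ ^ k),
    ← h, inv_mul_cancel_left₀ hlam.ne']

theorem measureReal_cyl_eq_Fser_mul [IsProbabilityMeasure ν] {Hi : ℕ → ℝ} {i j : Fin 2}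
    (hij : i ≠ j) (hβ : 0 ≤ β) (hlam : 1 < lam) (hH : ∀ x, 0 ≤ H x)
    (hνeig : ∀ f : Sig → ℝ, Continuous f → ∫ x, transfer β H f x ∂ν = lam * ∫ x, f x ∂ν)
    (hzero : ∀ x ∈ cyl [i, i], H x = 0)
    (hexc : ∀ k, 1 ≤ k → ∀ x ∈ cyl (j :: (List.replicate k i ++ [j])), H x = Hi k) :
    ν.real (cyl [j, i]) = Fser β Hi lam * ν.real (cyl [i, j]) := by
  have hlam0 : 0 < lam := by linarith
  -- `[j i^{m+1}]` splits into the excursion `[j i^{m+1} j]` and `[j i^{m+2}]`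
  have hrec : ∀ m, ν.real (cyl (j :: List.replicate (m + 1) i))
      = ν.real (cyl (j :: List.replicate (m + 1 + 1) i))
        + ν.real (cyl (j :: (List.replicate (m + 1) i ++ [j]))) := fun m => by
    rw [← cyl_append_singleton_union hij (j :: List.replicate (m + 1) i),
      measureReal_union (disjoint_cyl_append_singleton hij _) (measurableSet_cyl _),
      List.cons_append, List.cons_append, ← List.replicate_succ']
  have hlim : Tendsto (fun m => ν.real (cyl (j :: List.replicate (m + 1) i))) atTop (𝓝 0) :=
    squeeze_zero (fun _ => measureReal_nonneg)
      (fun m => (measureReal_cyl_le hβ hlam0 hH hνeig _).trans_eq (by simp))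
      ((tendsto_pow_atTop_nhds_zero_of_lt_one (by positivity)
        (inv_lt_one_of_one_lt₀ hlam)).comp (tendsto_add_atTop_nat 2))
  have h := hasSum_of_eq_add_of_tendsto (fun _ => measureReal_nonneg) hrec hlim
  simp only [measureReal_cyl_excursion hlam0 hνeig hzero hexc, sub_zero] at h
  exact h.tsum_eq.symm.trans (tsum_mul_right ..)

end Conformal

theorem stmt_12_general (H : Sig → ℝ) (H0 H1 : ℕ → ℝ) (hR : ReducedDW H H0 H1)
    (β : ℝ) (hβ : 0 < β) (Φ : Sig → ℝ) (lam : ℝ) (ν : Measure Sig)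
    (hΦc : Continuous Φ) (hΦpos : ∀ x, 0 < Φ x) (hΦmax : IsGreatest (Set.range Φ) 1)
    (heig : transfer β H Φ = fun x => lam * Φ x)
    (hν : IsProbabilityMeasure ν)
    (hνeig : ∀ f : Sig → ℝ, Continuous f → ∫ x, transfer β H f x ∂ν = lam * ∫ x, f x ∂ν) :
    Fser β H0 lam * Fser β H1 lam = 1 ∧
    Φ (cons2 0 opt) = Fser β H1 lam * Φ (cons2 1 zpt) ∧
    Φ (cons2 1 zpt) = Fser β H0 lam * Φ (cons2 0 opt) ∧
    (ν (cyl [0, 1])).toReal = Fser β H0 lam * (ν (cyl [1, 0])).toReal ∧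
    (ν (cyl [1, 0])).toReal = Fser β H1 lam * (ν (cyl [0, 1])).toReal := by
  have hz0 : ∀ x ∈ cyl [0, 0], H x = 0 := fun x hx => hR.zero x (Or.inl hx)
  have hz1 : ∀ x ∈ cyl [1, 1], H x = 0 := fun x hx => hR.zero x (Or.inr hx)
  have hlam : 1 < lam :=
    one_lt_of_transfer_eq (hz0 zpt fun n (hn : n < 2) => by interval_cases n <;> rfl) hΦpos heig
  have hΦ1 : ∀ x, Φ x ≤ 1 := fun x => hΦmax.2 (Set.mem_range_self x)
  have hH0 : ∀ k, 1 ≤ k → 0 ≤ H0 k := fun k hk => (hR.pos0 k hk).le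
  have hH1 : ∀ k, 1 ≤ k → 0 ≤ H1 k := fun k hk => (hR.pos1 k hk).le
  obtain ⟨hchar, hΦ01⟩ := Fser_mul_Fser_eq_one_and_eigenfunction_eq (i := 0) (j := 1) (by decide)
    hβ.le hlam hΦc hΦpos hΦ1 heig hz0 hz1 hR.val1 hR.val0 hH1 hH0
  obtain ⟨-, hΦ10⟩ := Fser_mul_Fser_eq_one_and_eigenfunction_eq (i := 1) (j := 0) (by decide)
    hβ.le hlam hΦc hΦpos hΦ1 heig hz1 hz0 hR.val0 hR.val1 hH0 hH1
  exact ⟨mul_comm (Fser β H0 lam) _ ▸ hchar, hΦ01, hΦ10,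
    measureReal_cyl_eq_Fser_mul (i := 1) (j := 0) (by decide) hβ.le hlam hR.nonneg hνeig
      hz1 hR.val0,
    measureReal_cyl_eq_Fser_mul (i := 0) (j := 1) (by decide) hβ.le hlam hR.nonneg hνeig
      hz0 hR.val1⟩

/-- the characteristic equation `F_β^0(λ_β) F_β^1(λ_β) = 1` and the relations
between the values of `Φ_β` and `ν_β` on the cylinders `[01]` and `[10]`. -/
theorem stmt_12 (H : Sig → ℝ) (H0 H1 : ℕ → ℝ) (hR : ReducedDW H H0 H1)
    (β : ℝ) (hβ : 0 < β) (Φ : Sig → ℝ) (lam : ℝ) (ν : Measure Sig)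
    (hΦc : Continuous Φ) (hΦpos : ∀ x, 0 < Φ x) (hΦmax : IsGreatest (Set.range Φ) 1)
    (hlam : 0 < lam) (heig : transfer β H Φ = fun x => lam * Φ x)
    (hν : IsProbabilityMeasure ν)
    (hνeig : ∀ f : Sig → ℝ, Continuous f → ∫ x, transfer β H f x ∂ν = lam * ∫ x, f x ∂ν) :
    Fser β H0 lam * Fser β H1 lam = 1 ∧
    Φ (cons2 0 opt) = Fser β H1 lam * Φ (cons2 1 zpt) ∧
    Φ (cons2 1 zpt) = Fser β H0 lam * Φ (cons2 0 opt) ∧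
    (ν (cyl [0, 1])).toReal = Fser β H0 lam * (ν (cyl [1, 0])).toReal ∧
    (ν (cyl [1, 0])).toReal = Fser β H1 lam * (ν (cyl [0, 1])).toReal :=
  stmt_12_general H H0 H1 hR β hβ Φ lam ν hΦc hΦpos hΦmax heig hν hνeig
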